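/- Let G be a chordal graph, I ⊆ V(G), and G′ = G − E(G[I]). If H is an induced subgraph of G′ on 2k+1 ≥ 5 vertices whose complement is an odd cycle, then the induced subgraph of G on the same vertex set has exactly one edge more than H. -/

import Mathlib

open SimpleGraph

variable {V : Type*}

/-- Number of connected components of a graph. -/
noncomputable def numComponents (G : SimpleGraph V) : ℕ := Nat.card G.ConnectedComponent

/-- A vertex is a cut vertex if its removal increases the number of connected components. -/
def IsCutVertex (G : SimpleGraph V) (v : V) : Prop :=
  numComponents G < numComponents (G.induce {u | u ≠ v})

/-- `T` is a spanning tree of `G`: a subgraph on all vertices of `G` that is a tree. -/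
def IsSpanningTree (G T : SimpleGraph V) : Prop := T ≤ G ∧ T.IsTree

/-- `v` is dominated by `S` in the graph `T`. -/
def DominatedIn (T : SimpleGraph V) (S : Set V) (v : V) : Prop :=
  v ∈ S ∨ ∃ u ∈ S, T.Adj v u

/-- `v` is simultaneously dominated by `S`: dominated in every spanning tree of `G`. -/
def SimDominated (G : SimpleGraph V) (S : Set V) (v : V) : Prop :=
  ∀ T : SimpleGraph V, IsSpanningTree G T → DominatedIn T S v

/-- `S` is a simultaneous dominating set of `G`. -/
def IsSDSet (G : SimpleGraph V) (S : Set V) : Prop := ∀ v, SimDominated G S v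

/-- `C` is a vertex cover of `G`. -/
def IsVertexCover (G : SimpleGraph V) (C : Set V) : Prop :=
  ∀ ⦃u v : V⦄, G.Adj u v → u ∈ C ∨ v ∈ C

/-- A block of `G`: a maximal vertex set inducing a connected subgraph without cut vertices. -/
def IsBlock (G : SimpleGraph V) (B : Set V) : Prop :=
  B.Nonempty ∧ (G.induce B).Connected ∧ (∀ x, ¬ IsCutVertex (G.induce B) x) ∧
    ∀ B' : Set V, B ⊆ B' → (G.induce B').Connected →
      (∀ x, ¬ IsCutVertex (G.induce B') x) → B' = B

/-- 2-connected: connected, at least 3 vertices, no cut vertex. -/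
def TwoConnected (G : SimpleGraph V) [Fintype V] : Prop :=
  G.Connected ∧ 3 ≤ Fintype.card V ∧ ∀ v, ¬ IsCutVertex G v

/-- Colours 1, 0, 0̂. -/
inductive Col : Type
  | one | zero | zhat
deriving DecidableEq

/-- `S` is an `f`-respecting simultaneous dominating set of `G`. -/
def RespSDS (G : SimpleGraph V) (f : V → Col) (S : Set V) : Prop :=
  (∀ v, f v = Col.one → v ∈ S) ∧ ∀ v, f v = Col.zhat → SimDominated G S v

/-- A minimum `f`-respecting simultaneous dominating set. -/
def MinRespSDS (G : SimpleGraph V) (f : V → Col) (S : Set V) : Prop :=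
  RespSDS G f S ∧ ∀ S' : Set V, RespSDS G f S' → S.ncard ≤ S'.ncard

/-- A graph is chordal iff it has no induced cycle of length at least 4. -/
def IsChordal (G : SimpleGraph V) : Prop :=
  ∀ n : ℕ, 4 ≤ n → IsEmpty (SimpleGraph.cycleGraph n ↪g G)

/-- `G − E(G[I])`: delete all edges between vertices of `I`. -/
def removeInside (G : SimpleGraph V) (I : Set V) : SimpleGraph V where
  Adj u w := G.Adj u w ∧ ¬(u ∈ I ∧ w ∈ I)
  symm := ⟨fun u w ⟨h, h'⟩ => ⟨h.symm, fun ⟨a, b⟩ => h' ⟨b, a⟩⟩⟩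
  loopless := ⟨fun u h => G.loopless.irrefl u h.1⟩

/-- `G` has an odd hole: an induced cycle of odd length at least 5. -/
def HasOddHole (G : SimpleGraph V) : Prop :=
  ∃ n : ℕ, 5 ≤ n ∧ Odd n ∧ Nonempty (SimpleGraph.cycleGraph n ↪g G)

/-- Perfect graph, via the strong perfect graph theorem characterization:
no odd hole and no odd antihole (an odd antihole of `G` is an odd hole of `Gᶜ`). -/
def IsPerfect (G : SimpleGraph V) : Prop := ¬ HasOddHole G ∧ ¬ HasOddHole Gᶜ

/-!
The vertices of `H` lying in `I` are pairwise non-adjacent in `G′ ⊇ H`, hence pairwise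
consecutive on the cycle `Hᶜ`; a cycle of length at least four has no triangle, so there are at
most two of them and `G` adds at most one edge to `H`. It adds at least one: otherwise `H` would be
an induced subgraph of `G`, but the complement of a cycle of length at least five is not chordal
(it contains the induced 4-cycle `0, 3, 1, 4`, or is itself a pentagon).
-/

variable {W : Type*}

namespace SimpleGraph

theorem card_edgeSet_induce_range (G : SimpleGraph V) {f : W → V} (hf : f.Injective) :
    Nat.card (G.induce (Set.range f)).edgeSet = Nat.card (G.comap f).edgeSet :=
  (Nat.card_congr (Embedding.comap ⟨f, hf⟩ G).isoInduceRange.mapEdgeSet).symm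

theorem card_edgeSet_sup_edge [Finite V] {G : SimpleGraph V} {s t : V} (hn : ¬G.Adj s t)
    (h : s ≠ t) : Nat.card (G ⊔ edge s t).edgeSet = Nat.card G.edgeSet + 1 := by
  classical
  have := Fintype.ofFinite V
  simp only [Nat.card_eq_fintype_card, ← edgeFinset_card]
  exact G.card_edgeFinset_sup_edge hn h

theorem cycleGraph_adj_iff_val {n : ℕ} (hn : 2 ≤ n) {u v : Fin n} :
    (cycleGraph n).Adj u v ↔ u.val + 1 = v.val ∨ v.val + 1 = u.val ∨
      u.val = 0 ∧ v.val + 1 = n ∨ v.val = 0 ∧ u.val + 1 = n := by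
  rw [cycleGraph_adj']
  have hu := u.isLt
  have hv := v.isLt
  rcases le_or_gt v u with h | h
  · rcases h.eq_or_lt with rfl | h'
    · rw [Fin.sub_val_of_le h]
      omega
    rw [Fin.sub_val_of_le h, Fin.coe_sub_iff_lt.2 h']
    rw [Fin.lt_def] at h'
    omega
  · rw [Fin.sub_val_of_le h.le, Fin.coe_sub_iff_lt.2 h]
    rw [Fin.lt_def] at h
    omega

theorem cycleGraph_cliqueFree_three {n : ℕ} (hn : 4 ≤ n) : (cycleGraph n).CliqueFree 3 := by
  classical
  intro s hs
  obtain ⟨a, b, c, -, -, -, rfl⟩ := Finset.card_eq_three.1 hs.card_eq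
  simp only [is3Clique_triple_iff, cycleGraph_adj_iff_val (by omega : 2 ≤ n)] at hs
  omega

theorem IsClique.eq_or_eq_of_cliqueFree_three {G : SimpleGraph V} (hG : G.CliqueFree 3)
    {s : Set V} (hs : G.IsClique s) {a b c : V} (ha : a ∈ s) (hb : b ∈ s) (hab : a ≠ b)
    (hc : c ∈ s) : c = a ∨ c = b := by
  classical
  by_contra! h
  exact hG {a, b, c} (is3Clique_triple_iff.2 ⟨hs ha hb hab, hs ha hc h.1.symm, hs hb hc h.2.symm⟩)

def cycleGraphFiveEmbeddingCompl : cycleGraph 5 ↪g (cycleGraph 5)ᶜ where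
  toFun i := 2 * i
  inj' i j := by revert i j; decide
  map_rel_iff' {i j} := by revert i j; decide

def cycleGraphFourEmbeddingCompl {n : ℕ} (hn : 6 ≤ n) : cycleGraph 4 ↪g (cycleGraph n)ᶜ where
  toFun i := ⟨![0, 3, 1, 4] i, by fin_cases i <;> simp <;> omega⟩
  inj' i j h := by
    rw [Fin.mk.injEq] at h
    fin_cases i <;> fin_cases j <;> simp_all
  map_rel_iff' {i j} := by
    change (cycleGraph n)ᶜ.Adj ⟨_, _⟩ ⟨_, _⟩ ↔ _
    rw [compl_adj, cycleGraph_adj_iff_val (by omega), cycleGraph_adj_iff_val (by norm_num)]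
    fin_cases i <;> fin_cases j <;> simp <;> omega

end SimpleGraph

theorem IsChordal.of_embedding {G : SimpleGraph V} {F : SimpleGraph W} (hG : IsChordal G)
    (f : F ↪g G) : IsChordal F :=
  fun n hn => ⟨fun g => (hG n hn).false (f.comp g)⟩

theorem not_isChordal_compl_cycleGraph {n : ℕ} (hn : 5 ≤ n) : ¬ IsChordal (cycleGraph n)ᶜ := by
  intro h
  rcases hn.eq_or_lt with rfl | hn
  · exact (h 5 (by norm_num)).false cycleGraphFiveEmbeddingCompl
  · exact (h 4 le_rfl).false (cycleGraphFourEmbeddingCompl hn)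

section removeInside

variable {G : SimpleGraph V} {I : Set V} {F : SimpleGraph W}

theorem comap_adj_of_embedding_removeInside (e : F ↪g removeInside G I) {i j : W} :
    (G.comap e).Adj i j ↔ F.Adj i j ∨ G.Adj (e i) (e j) ∧ e i ∈ I ∧ e j ∈ I := by
  rw [comap_adj, ← e.map_adj_iff]
  change _ ↔ G.Adj _ _ ∧ ¬_ ∨ _
  tauto

theorem isClique_compl_preimage_removeInside (e : F ↪g removeInside G I) :
    Fᶜ.IsClique (e ⁻¹' I) := fun i hi j hj hij =>
  (compl_adj F i j).2 ⟨hij, fun h => (e.map_adj_iff.2 h).2 ⟨hi, hj⟩⟩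

theorem exists_comap_eq_sup_edge (hG : IsChordal G) (hF : ¬ IsChordal F)
    (hFc : Fᶜ.CliqueFree 3) (e : F ↪g removeInside G I) :
    ∃ a b, a ≠ b ∧ ¬ F.Adj a b ∧ G.comap e = F ⊔ edge a b := by
  obtain ⟨a, b, hGab, ha, hb⟩ : ∃ a b, G.Adj (e a) (e b) ∧ e a ∈ I ∧ e b ∈ I := by
    by_contra! h
    refine hF (hG.of_embedding ⟨e.toEmbedding, fun {i j} => ?_⟩)
    rw [← e.map_adj_iff]
    exact ⟨fun hGij => ⟨hGij, fun ⟨hi, hj⟩ => h i j hGij hi hj⟩, And.left⟩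
  have hab : a ≠ b := fun h => hGab.ne (congrArg e h)
  have hJ := isClique_compl_preimage_removeInside e
  refine ⟨a, b, hab, ((compl_adj F a b).1 (hJ ha hb hab)).2, ?_⟩
  ext i j
  rw [comap_adj_of_embedding_removeInside, sup_adj, edge_adj]
  constructor
  · rintro (h | ⟨hGij, hi, hj⟩)
    · exact Or.inl h
    · right
      have hij : i ≠ j := fun h => hGij.ne (congrArg e h)
      rcases hJ.eq_or_eq_of_cliqueFree_three hFc ha hb hab hi with rfl | rfl <;>
        rcases hJ.eq_or_eq_of_cliqueFree_three hFc ha hb hab hj with rfl | rfl <;> tauto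
  · rintro (h | ⟨⟨rfl, rfl⟩ | ⟨rfl, rfl⟩, -⟩)
    · exact Or.inl h
    · exact Or.inr ⟨hGab, ha, hb⟩
    · exact Or.inr ⟨hGab.symm, hb, ha⟩

end removeInside

theorem stmt15_general (G : SimpleGraph V) (hG : IsChordal G) (I : Set V)
    (k : ℕ) (hk : 2 ≤ k)
    (e : (SimpleGraph.cycleGraph (2 * k + 1))ᶜ ↪g removeInside G I) :
    Nat.card (G.induce (Set.range ⇑e)).edgeSet =
      Nat.card ((removeInside G I).induce (Set.range ⇑e)).edgeSet + 1 := by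
  have hn : 5 ≤ 2 * k + 1 := by omega
  have hFc : (cycleGraph (2 * k + 1))ᶜᶜ.CliqueFree 3 := by
    rw [compl_compl]
    exact cycleGraph_cliqueFree_three (by omega)
  obtain ⟨a, b, hab, hnadj, hcomap⟩ :=
    exists_comap_eq_sup_edge hG (not_isChordal_compl_cycleGraph hn) hFc e
  rw [card_edgeSet_induce_range G e.injective, card_edgeSet_induce_range _ e.injective, hcomap,
    e.comap_eq]
  exact card_edgeSet_sup_edge hnadj hab

/-- If `G` is chordal, `G′ = G − E(G[I])`, and `H` is an induced subgraph of `G′`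
on `2k+1 ≥ 5` vertices whose complement is an odd cycle, then the subgraph of `G` induced on
the same vertex set has exactly one edge more than `H`. -/
theorem stmt15 [Fintype V] (G : SimpleGraph V) (hG : IsChordal G) (I : Set V)
    (k : ℕ) (hk : 2 ≤ k)
    (e : (SimpleGraph.cycleGraph (2 * k + 1))ᶜ ↪g removeInside G I) :
    Nat.card (G.induce (Set.range ⇑e)).edgeSet =
      Nat.card ((removeInside G I).induce (Set.range ⇑e)).edgeSet + 1 :=
  stmt15_general G hG I k hk e
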